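/- arXiv:0807.2627 — 2 statements merged into one kernel-verified Lean document; each statement's English description precedes it below -/
import Mathlib

section
/- Let α ∈ (0,1), N ≥ 2, and let ν be the measure on ℝ^N with density |z|^{-N-α}. For every unit vector e ∈ ℝ^N and every r > 0, the set P(r,e) = { z ∈ B : r |z·e| ≤ |z - (z·e)e|² } (where B is the unit ball) has finite ν-measure, and r · ν(P(r,e)) → 0 as r → 0, uniformly in e. -/
open MeasureTheory Metric Set
open scoped RealInnerProductSpace

/-!
On the dyadic shell `ρ/2 < ‖z‖ ≤ ρ`, a point of `P(r,e)` has `|z·e| ≤ min ρ (ρ²/r)`, so the shell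
meets `P(r,e)` inside a slab of width `2 min ρ (ρ²/r) ≤ 2 ρ^(1+θ) r^(-θ)` and a cube of side `2ρ`,
where the density is at most `(ρ/2)^(-N-α)`. This bounds the `ν`-mass of the shell by a multiple of
`r^(-θ) ρ^(θ-α)`; for `α < θ ≤ 1` the sum over `ρ = 2^(-k)` is geometric, so `ν(P(r,e)) ≲ r^(-θ)`,
uniformly in `e` since Lebesgue measure is rotation invariant. With `θ = (1+α)/2` this gives
`r ν(P(r,e)) ≲ r^((1-α)/2) → 0`.
-/

lemma min_le_rpow_mul_rpow {a b θ : ℝ} (ha : 0 ≤ a) (hb : 0 ≤ b) (hθ₀ : 0 ≤ θ) (hθ₁ : θ ≤ 1) :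
    min a b ≤ a ^ (1 - θ) * b ^ θ := by
  calc min a b = min a b ^ (1 - θ) * min a b ^ θ := by
        rw [← Real.rpow_add' (le_min ha hb) (by norm_num), sub_add_cancel, Real.rpow_one]
    _ ≤ a ^ (1 - θ) * b ^ θ := by
        have hm : 0 ≤ min a b := le_min ha hb
        exact mul_le_mul (Real.rpow_le_rpow hm (min_le_left a b) (by linarith))
          (Real.rpow_le_rpow hm (min_le_right a b) hθ₀) (by positivity) (by positivity)

section Parabolic

variable {E : Type*} [NormedAddCommGroup E] [InnerProductSpace ℝ E]

def parabolicRegion (r : ℝ) (e : E) : Set E :=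
  {z ∈ ball (0 : E) 1 | r * |⟪z, e⟫| ≤ ‖z - ⟪z, e⟫ • e‖ ^ 2}

lemma norm_sub_inner_smul_sq {e : E} (he : ‖e‖ = 1) (z : E) :
    ‖z - ⟪z, e⟫ • e‖ ^ 2 = ‖z‖ ^ 2 - ⟪z, e⟫ ^ 2 := by
  rw [norm_sub_sq_real, real_inner_smul_right, norm_smul, he, Real.norm_eq_abs, mul_pow, sq_abs]
  ring

lemma abs_inner_le_min_of_mem_parabolicRegion {r ρ : ℝ} (hr : 0 < r) {e z : E} (he : ‖e‖ = 1)
    (hz : z ∈ parabolicRegion r e) (hzρ : ‖z‖ ≤ ρ) : |⟪z, e⟫| ≤ min ρ (ρ ^ 2 / r) := by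
  have hinner : |⟪z, e⟫| ≤ ‖z‖ := by simpa [he] using abs_real_inner_le_norm z e
  refine le_min (hinner.trans hzρ) ((le_div_iff₀ hr).2 ?_)
  calc |⟪z, e⟫| * r = r * |⟪z, e⟫| := mul_comm _ _
    _ ≤ ‖z‖ ^ 2 - ⟪z, e⟫ ^ 2 := norm_sub_inner_smul_sq he z ▸ hz.2
    _ ≤ ρ ^ 2 := by nlinarith [norm_nonneg z, sq_nonneg ⟪z, e⟫]

end Parabolic

lemma ball_one_diff_zero_subset_iUnion_dyadic_annulus {E : Type*} [NormedAddCommGroup E] :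
    ball (0 : E) 1 \ {0} ⊆ ⋃ k : ℕ, closedBall 0 (2⁻¹ ^ k) \ closedBall 0 (2⁻¹ ^ k / 2) := by
  rintro z ⟨hz1, hz0⟩
  rw [mem_ball_zero_iff] at hz1
  obtain ⟨k, hk, hk'⟩ := exists_nat_pow_near_of_lt_one (norm_pos_iff.2 hz0) hz1.le
    (by norm_num : (0 : ℝ) < 2⁻¹) (by norm_num)
  refine mem_iUnion.2 ⟨k, mem_closedBall_zero_iff.2 hk', fun h => ?_⟩
  rw [mem_closedBall_zero_iff, pow_succ, ← div_eq_mul_inv] at *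
  linarith

lemma volume_euclideanSpace_box {ι : Type*} [Fintype ι] (b : ι → ℝ) :
    volume {z : EuclideanSpace ℝ ι | ∀ i, |z i| ≤ b i} = ∏ i, ENNReal.ofReal (2 * b i) := by
  have hbox : {z : EuclideanSpace ℝ ι | ∀ i, |z i| ≤ b i} =
      (MeasurableEquiv.toLp 2 (ι → ℝ)).symm ⁻¹' univ.pi fun i => Icc (-b i) (b i) := by
    ext z
    simp [abs_le, Pi.le_def, forall_and]
  rw [hbox, (EuclideanSpace.volume_preserving_symm_measurableEquiv_toLp ι).measure_preimage
    (MeasurableSet.univ_pi fun _ => measurableSet_Icc).nullMeasurableSet, volume_pi_pi]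
  simp only [Real.volume_Icc, sub_neg_eq_add, two_mul]

lemma pos_of_norm_eq_one {N : ℕ} {e : EuclideanSpace ℝ (Fin N)} (he : ‖e‖ = 1) : 0 < N := by
  rcases Nat.eq_zero_or_pos N with rfl | h
  · simp [Subsingleton.elim e 0] at he
  · exact h

lemma volume_abs_inner_le_inter_closedBall_le {N : ℕ} {e : EuclideanSpace ℝ (Fin N)}
    (he : ‖e‖ = 1) (δ ρ : ℝ) :
    volume {z | |⟪z, e⟫| ≤ δ ∧ ‖z‖ ≤ ρ} ≤
      ENNReal.ofReal (2 * δ) * ENNReal.ofReal (2 * ρ) ^ (N - 1) := by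
  set i₀ : Fin N := ⟨0, pos_of_norm_eq_one he⟩
  set e₀ : EuclideanSpace ℝ (Fin N) := EuclideanSpace.single i₀ 1
  have he₀ : ‖e₀‖ = 1 := by simp [e₀]
  obtain ⟨f, hf⟩ : ∃ f : EuclideanSpace ℝ (Fin N) ≃ₗᵢ[ℝ] EuclideanSpace ℝ (Fin N), f e₀ = e :=
    ⟨_, Submodule.reflection_sub (he₀.trans he.symm)⟩
  have hclosed : IsClosed {z : EuclideanSpace ℝ (Fin N) | |⟪z, e⟫| ≤ δ ∧ ‖z‖ ≤ ρ} :=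
    (isClosed_le (by fun_prop : Continuous fun z : EuclideanSpace ℝ (Fin N) => |⟪z, e⟫|)
      continuous_const).inter (isClosed_le continuous_norm continuous_const)
  rw [← f.measurePreserving.measure_preimage hclosed.measurableSet.nullMeasurableSet]
  calc volume (f ⁻¹' {z | |⟪z, e⟫| ≤ δ ∧ ‖z‖ ≤ ρ})
      ≤ volume {z : EuclideanSpace ℝ (Fin N) |
          ∀ i, |z i| ≤ Function.update (fun _ => ρ) i₀ δ i} := by
        refine measure_mono fun z ⟨hzδ, hzρ⟩ i => ?_
        rw [← hf, f.inner_map_map, f.norm_map] at *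
        rcases eq_or_ne i i₀ with rfl | hi
        · simpa [e₀, EuclideanSpace.inner_single_right] using hzδ
        · simpa [hi] using (PiLp.norm_apply_le z i).trans hzρ
    _ = ENNReal.ofReal (2 * δ) * ENNReal.ofReal (2 * ρ) ^ (N - 1) := by
        rw [volume_euclideanSpace_box, ← Finset.mul_prod_erase _ _ (Finset.mem_univ i₀),
          Finset.prod_congr rfl fun i hi => by
          rw [Function.update_of_ne (Finset.ne_of_mem_erase hi)]]
        simp

lemma div_two_rpow_mul_mul_two_mul_pow {N : ℕ} (hN : 1 ≤ N) {ρ : ℝ} (hρ : 0 < ρ) (α θ : ℝ) :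
    (ρ / 2) ^ (-(N:ℝ) - α) * (2 * ρ ^ (1 + θ) * (2 * ρ) ^ (N - 1)) =
      2 ^ (2 * N + α) * ρ ^ (θ - α) := by
  have hρpow : ρ ^ (-(N:ℝ) - α) * ρ ^ (1 + θ) * ρ ^ (N - 1) = ρ ^ (θ - α) := by
    rw [← Real.rpow_natCast, Nat.cast_sub hN, ← Real.rpow_add hρ, ← Real.rpow_add hρ]
    ring_nf
  have htwo : 2 * 2 ^ (N - 1) = (2:ℝ) ^ (N:ℝ) := by
    rw [← pow_succ', Nat.sub_add_cancel hN, Real.rpow_natCast]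
  rw [Real.div_rpow hρ.le zero_le_two, mul_pow, ← hρpow, div_eq_mul_inv,
    ← Real.rpow_neg zero_le_two, show 2 * (N:ℝ) + α = N + -(-N - α) by ring,
    Real.rpow_add two_pos, ← htwo]
  ring

lemma withDensity_parabolicRegion_inter_annulus_le {N : ℕ} {α θ r ρ : ℝ} (hα : -(N:ℝ) ≤ α)
    (hθ₀ : 0 ≤ θ) (hθ₁ : θ ≤ 1) (hr : 0 < r) (hρ : 0 < ρ) {e : EuclideanSpace ℝ (Fin N)}
    (he : ‖e‖ = 1) :
    volume.withDensity (fun z => ENNReal.ofReal (‖z‖ ^ (-(N:ℝ) - α)))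
        (parabolicRegion r e ∩ (closedBall 0 ρ \ closedBall 0 (ρ / 2))) ≤
      ENNReal.ofReal (2 ^ (2 * N + α) * r ^ (-θ) * ρ ^ (θ - α)) := by
  set δ := ρ ^ (1 + θ) * r ^ (-θ)
  have hmin : min ρ (ρ ^ 2 / r) ≤ δ :=
    calc min ρ (ρ ^ 2 / r) ≤ ρ ^ (1 - θ) * (ρ ^ 2 / r) ^ θ :=
          min_le_rpow_mul_rpow hρ.le (by positivity) hθ₀ hθ₁
      _ = ρ ^ (1 + θ) * r ^ (-θ) := by
          rw [Real.div_rpow (by positivity) hr.le, ← Real.rpow_natCast, ← Real.rpow_mul hρ.le,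
            div_eq_mul_inv, ← Real.rpow_neg hr.le, ← mul_assoc, ← Real.rpow_add hρ]
          ring_nf
  rw [withDensity_apply' _]
  calc ∫⁻ z in parabolicRegion r e ∩ (closedBall 0 ρ \ closedBall 0 (ρ / 2)),
        ENNReal.ofReal (‖z‖ ^ (-(N:ℝ) - α))
      ≤ ∫⁻ _ in parabolicRegion r e ∩ (closedBall 0 ρ \ closedBall 0 (ρ / 2)),
          ENNReal.ofReal ((ρ / 2) ^ (-(N:ℝ) - α)) :=
        setLIntegral_mono measurable_const fun z ⟨_, _, hz⟩ => ENNReal.ofReal_le_ofReal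
          (Real.rpow_le_rpow_of_nonpos (by positivity)
            (not_le.1 (mt mem_closedBall_zero_iff.2 hz)).le (by linarith))
    _ = ENNReal.ofReal ((ρ / 2) ^ (-(N:ℝ) - α)) *
          volume (parabolicRegion r e ∩ (closedBall 0 ρ \ closedBall 0 (ρ / 2))) :=
        setLIntegral_const _ _
    _ ≤ ENNReal.ofReal ((ρ / 2) ^ (-(N:ℝ) - α)) * volume {z | |⟪z, e⟫| ≤ δ ∧ ‖z‖ ≤ ρ} := by
        gcongr
        rintro z ⟨hzP, hzρ, -⟩
        rw [mem_closedBall_zero_iff] at hzρ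
        exact ⟨(abs_inner_le_min_of_mem_parabolicRegion hr he hzP hzρ).trans hmin, hzρ⟩
    _ ≤ ENNReal.ofReal ((ρ / 2) ^ (-(N:ℝ) - α)) *
          (ENNReal.ofReal (2 * δ) * ENNReal.ofReal (2 * ρ) ^ (N - 1)) := by
        gcongr
        exact volume_abs_inner_le_inter_closedBall_le he δ ρ
    _ = ENNReal.ofReal (2 ^ (2 * N + α) * r ^ (-θ) * ρ ^ (θ - α)) := by
        rw [← ENNReal.ofReal_pow (by positivity), ← ENNReal.ofReal_mul (by positivity),
          ← ENNReal.ofReal_mul (by positivity)]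
        congr 1
        calc (ρ / 2) ^ (-(N:ℝ) - α) * (2 * δ * (2 * ρ) ^ (N - 1))
            = (ρ / 2) ^ (-(N:ℝ) - α) * (2 * ρ ^ (1 + θ) * (2 * ρ) ^ (N - 1)) * r ^ (-θ) := by ring
          _ = _ := by rw [div_two_rpow_mul_mul_two_mul_pow (pos_of_norm_eq_one he) hρ]; ring

lemma withDensity_parabolicRegion_le {N : ℕ} {α θ r : ℝ} (hα : -(N:ℝ) ≤ α) (hθ₀ : 0 ≤ θ)
    (hαθ : α < θ) (hθ₁ : θ ≤ 1) (hr : 0 < r) {e : EuclideanSpace ℝ (Fin N)} (he : ‖e‖ = 1) :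
    volume.withDensity (fun z => ENNReal.ofReal (‖z‖ ^ (-(N:ℝ) - α))) (parabolicRegion r e) ≤
      ENNReal.ofReal (2 ^ (2 * N + α) * (1 - 2 ^ (α - θ))⁻¹ * r ^ (-θ)) := by
  set ν := volume.withDensity fun z : EuclideanSpace ℝ (Fin N) =>
    ENNReal.ofReal (‖z‖ ^ (-(N:ℝ) - α))
  set C := 2 ^ (2 * N + α) * r ^ (-θ)
  set q : ℝ := 2 ^ (α - θ)
  have hq₀ : 0 ≤ q := by positivity
  have hq₁ : q < 1 := Real.rpow_lt_one_of_one_lt_of_neg one_lt_two (by linarith)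
  have hdyadic (k : ℕ) : (2⁻¹ ^ k : ℝ) ^ (θ - α) = q ^ k := by
    rw [← Real.rpow_pow_comm (by norm_num), Real.inv_rpow zero_le_two, ← Real.rpow_neg zero_le_two,
      neg_sub]
  have : Nontrivial (EuclideanSpace ℝ (Fin N)) :=
    nontrivial_of_ne e 0 (by simp [← norm_ne_zero_iff, he])
  calc ν (parabolicRegion r e) = ν (parabolicRegion r e \ {0}) :=
        (measure_sdiff_null (withDensity_absolutelyContinuous _ _ (measure_singleton 0))).symm
    _ ≤ ν (⋃ k : ℕ,
          parabolicRegion r e ∩ (closedBall 0 (2⁻¹ ^ k) \ closedBall 0 (2⁻¹ ^ k / 2))) := by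
        rw [← inter_iUnion]
        exact measure_mono fun z hz =>
          ⟨hz.1, ball_one_diff_zero_subset_iUnion_dyadic_annulus ⟨hz.1.1, hz.2⟩⟩
    _ ≤ ∑' k : ℕ, ν (parabolicRegion r e ∩ (closedBall 0 (2⁻¹ ^ k) \ closedBall 0 (2⁻¹ ^ k / 2))) :=
        measure_iUnion_le _
    _ ≤ ∑' k : ℕ, ENNReal.ofReal (C * q ^ k) := ENNReal.tsum_le_tsum fun k => by
        rw [← hdyadic]
        exact withDensity_parabolicRegion_inter_annulus_le hα hθ₀ hθ₁ hr (by positivity) he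
    _ = ENNReal.ofReal (2 ^ (2 * N + α) * (1 - q)⁻¹ * r ^ (-θ)) := by
        rw [← ENNReal.ofReal_tsum_of_nonneg (fun k => by positivity)
          ((summable_geometric_of_lt_one hq₀ hq₁).mul_left C), tsum_mul_left,
          tsum_geometric_of_lt_one hq₀ hq₁, mul_right_comm]

lemma exists_pos_forall_mul_rpow_lt (K : ℝ) {s ε : ℝ} (hs : 0 < s) (hε : 0 < ε) :
    ∃ r₀ > 0, ∀ r, 0 < r → r < r₀ → K * r ^ s < ε := by
  have hcont : ContinuousAt (fun r : ℝ => K * r ^ s) 0 :=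
    continuousAt_const.mul (Real.continuousAt_rpow_const 0 s (Or.inr hs.le))
  obtain ⟨r₀, hr₀, h⟩ := Metric.continuousAt_iff.1 hcont ε hε
  refine ⟨r₀, hr₀, fun r hr hrr₀ => ?_⟩
  have := h (x := r) (by rwa [Real.dist_eq, sub_zero, abs_of_pos hr])
  rw [Real.zero_rpow hs.ne', mul_zero, Real.dist_eq, sub_zero] at this
  exact (le_abs_self _).trans_lt this

theorem fractional_kernel_parabolic_region_general (N : ℕ) (α : ℝ)
    (hα : α ∈ Set.Ioo (0:ℝ) 1)
    (ν : Measure (EuclideanSpace ℝ (Fin N)))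
    (hν : ν = volume.withDensity fun z => ENNReal.ofReal (‖z‖ ^ (-(N:ℝ) - α)))
    (P : ℝ → EuclideanSpace ℝ (Fin N) → Set (EuclideanSpace ℝ (Fin N)))
    (hP : ∀ r e, P r e = {z ∈ Metric.ball (0 : EuclideanSpace ℝ (Fin N)) 1 |
        r * |⟪z, e⟫| ≤ ‖z - ⟪z, e⟫ • e‖ ^ 2}) :
    (∀ r : ℝ, 0 < r → ∀ e : EuclideanSpace ℝ (Fin N), ‖e‖ = 1 → ν (P r e) < ⊤) ∧
    (∀ ε : ℝ, 0 < ε → ∃ r₀ > (0:ℝ), ∀ r : ℝ, 0 < r → r < r₀ →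
      ∀ e : EuclideanSpace ℝ (Fin N), ‖e‖ = 1 →
        ENNReal.ofReal r * ν (P r e) < ENNReal.ofReal ε) := by
  obtain ⟨hα₀, hα₁⟩ := hα
  obtain rfl : P = parabolicRegion := funext₂ hP
  subst hν
  set θ := (1 + α) / 2 with hθ
  set K : ℝ := 2 ^ (2 * N + α) * (1 - 2 ^ (α - θ))⁻¹
  have hbound (r : ℝ) (hr : 0 < r) (e : EuclideanSpace ℝ (Fin N)) (he : ‖e‖ = 1) :
      volume.withDensity (fun z => ENNReal.ofReal (‖z‖ ^ (-(N:ℝ) - α))) (parabolicRegion r e) ≤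
        ENNReal.ofReal (K * r ^ (-θ)) :=
    withDensity_parabolicRegion_le (by linarith [N.cast_nonneg (α := ℝ)]) (by linarith)
      (by linarith) (by linarith) hr he
  refine ⟨fun r hr e he => (hbound r hr e he).trans_lt ENNReal.ofReal_lt_top, fun ε hε => ?_⟩
  obtain ⟨r₀, hr₀, hsmall⟩ := exists_pos_forall_mul_rpow_lt K (s := 1 - θ) (by linarith) hε
  refine ⟨r₀, hr₀, fun r hr hrr₀ e he => ?_⟩
  calc ENNReal.ofReal r * _ ≤ ENNReal.ofReal r * ENNReal.ofReal (K * r ^ (-θ)) := by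
        gcongr
        exact hbound r hr e he
    _ = ENNReal.ofReal (K * r ^ (1 - θ)) := by
        rw [← ENNReal.ofReal_mul hr.le, sub_eq_add_neg, Real.rpow_add hr, Real.rpow_one]
        ring_nf
    _ < ENNReal.ofReal ε := (ENNReal.ofReal_lt_ofReal_iff hε).2 (hsmall r hr hrr₀)

/-- For `ν(dz) = |z|^{-N-α} dz` with `α ∈ (0,1)` and `N ≥ 2`, the parabolic region
`P(r,e) = { z ∈ B : r|z·e| ≤ |z - (z·e)e|² }` has finite `ν`-measure, and
`r · ν(P(r,e)) → 0` as `r → 0`, uniformly in the unit vector `e`. -/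
theorem fractional_kernel_parabolic_region (N : ℕ) (hN : 2 ≤ N) (α : ℝ)
    (hα : α ∈ Set.Ioo (0:ℝ) 1)
    (ν : Measure (EuclideanSpace ℝ (Fin N)))
    (hν : ν = volume.withDensity fun z => ENNReal.ofReal (‖z‖ ^ (-(N:ℝ) - α)))
    (P : ℝ → EuclideanSpace ℝ (Fin N) → Set (EuclideanSpace ℝ (Fin N)))
    (hP : ∀ r e, P r e = {z ∈ Metric.ball (0 : EuclideanSpace ℝ (Fin N)) 1 |
        r * |⟪z, e⟫| ≤ ‖z - ⟪z, e⟫ • e‖ ^ 2}) :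
    (∀ r : ℝ, 0 < r → ∀ e : EuclideanSpace ℝ (Fin N), ‖e‖ = 1 → ν (P r e) < ⊤) ∧
    (∀ ε : ℝ, 0 < ε → ∃ r₀ > (0:ℝ), ∀ r : ℝ, 0 < r → r < r₀ →
      ∀ e : EuclideanSpace ℝ (Fin N), ‖e‖ = 1 →
        ENNReal.ofReal r * ν (P r e) < ENNReal.ofReal ε) :=
  fractional_kernel_parabolic_region_general N α hα ν hν P hP
end

section
/- Let α ∈ (0,1), N ≥ 2, B' a real number, δ > 0, and write z = (z₁, z') ∈ ℝ × ℝ^{N-1}. Then (1-α) ∫_{{(z₁,z') : |z'| ≤ δ, 0 ≤ z₁ ≤ B'|z'|²}} |z|^{-N-α} dz converges, as α → 1⁻, to C · max(B',0) · σ(S^{N-2}) for an explicit positive constant C (after the change of variables z₁ = r²τ with r = |z'|), i.e. the rescaled singular measure of the region between the hyperplane {z₁ = 0} and the paraboloid {z₁ = B'|z'|²} converges to a constant multiple of B'⁺. -/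
/-!
Write `z = (z₁, z')` and `r = ‖z'‖`. Replacing `|z|` by `r` gives a model integral that Fubini and
polar coordinates compute exactly: the `z₁`-fibre has length `b r²`, and
`r^(N-2) · b r² · r^(-N-α) = b r^(-α)` integrates over `(0, t]` to `b t^(1-α) / (1-α)`.
Since `r ≤ |z|`, the model over `r ≤ δ` bounds the integral from above; on `r ≤ t` one has
`|z| ≤ √(1 + b²t²) r`, so a fixed multiple of the model over `r ≤ t` bounds it from below.
Choosing `t = (1-α) δ`, both bounds on `(1-α) · ∫` tend to `b σ(S^{N-2})`, because `x^x → 1`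
as `x → 0⁺`. For `b ≤ 0` the region lies in `{z₁ = 0}` and is null.
-/

open MeasureTheory Metric Filter Set
open scoped ENNReal Topology
open Module (finrank)

theorem tendsto_rpow_self_nhdsGT_zero : Tendsto (fun x : ℝ => x ^ x) (𝓝[>] 0) (𝓝 1) := by
  have hexp : Tendsto (fun x : ℝ => Real.exp (Real.log x * x)) (𝓝 0) (𝓝 1) := by
    simpa [Function.comp_def, mul_comm] using
      (Real.continuous_exp.comp Real.continuous_mul_log).tendsto 0
  refine (hexp.mono_left nhdsWithin_le_nhds).congr' ?_
  filter_upwards [self_mem_nhdsWithin] with x hx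
  rw [Real.rpow_def_of_pos hx]

section Polar

variable {E : Type*} [NormedAddCommGroup E] [NormedSpace ℝ E] [MeasurableSpace E] [BorelSpace E]
  [Nontrivial E] [FiniteDimensional ℝ E] (μ : Measure E) [μ.IsAddHaarMeasure]

theorem lintegral_fun_norm_addHaar (g : ℝ → ℝ≥0∞) (hg : Measurable g) :
    ∫⁻ x, g ‖x‖ ∂μ = μ.toSphere univ *
      ∫⁻ y in Ioi (0 : ℝ), ENNReal.ofReal (y ^ (finrank ℝ E - 1)) * g y := by
  have hm : Measurable fun p : sphere (0 : E) 1 × Ioi (0 : ℝ) => g p.2 :=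
    hg.comp (measurable_subtype_coe.comp measurable_snd)
  calc ∫⁻ x, g ‖x‖ ∂μ
      = ∫⁻ x : ({(0 : E)}ᶜ : Set E), g ‖(x : E)‖ ∂(μ.comap (↑)) := by
        rw [lintegral_subtype_comap (measurableSet_singleton 0).compl (fun x => g ‖x‖),
          restrict_compl_singleton]
    _ = ∫⁻ p : sphere (0 : E) 1 × Ioi (0 : ℝ), g p.2
          ∂(μ.toSphere.prod (.volumeIoiPow (finrank ℝ E - 1))) := by
        rw [← μ.measurePreserving_homeomorphUnitSphereProd.lintegral_comp hm]
        simp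
    _ = μ.toSphere univ * ∫⁻ y : Ioi (0 : ℝ), g y
          ∂(Measure.volumeIoiPow (finrank ℝ E - 1)) := by
        rw [lintegral_prod _ hm.aemeasurable]
        simp [lintegral_const, mul_comm]
    _ = _ := by
        rw [Measure.volumeIoiPow, lintegral_withDensity_eq_lintegral_mul _
          (measurable_subtype_coe.pow_const _).ennreal_ofReal (g := fun y : Ioi (0 : ℝ) => g y)
          (hg.comp measurable_subtype_coe)]
        exact congrArg _ <| lintegral_subtype_comap measurableSet_Ioi
          (fun y => ENNReal.ofReal (y ^ (finrank ℝ E - 1)) * g y)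

end Polar

section ParaboloidRegion

variable {E : Type*} [NormedAddCommGroup E]

def paraboloidRegion (b t : ℝ) : Set (ℝ × E) :=
  {z | ‖z.2‖ ≤ t ∧ 0 ≤ z.1 ∧ z.1 ≤ b * ‖z.2‖ ^ 2}

theorem measurableSet_paraboloidRegion [MeasurableSpace E] [OpensMeasurableSpace E] (b t : ℝ) :
    MeasurableSet (paraboloidRegion (E := E) b t) :=
  (measurableSet_le measurable_snd.norm measurable_const).inter
    ((measurableSet_le measurable_const measurable_fst).inter
      (measurableSet_le measurable_fst ((measurable_snd.norm.pow_const 2).const_mul b)))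

theorem paraboloidRegion_mono {b t t' : ℝ} (h : t ≤ t') :
    paraboloidRegion (E := E) b t ⊆ paraboloidRegion b t' :=
  fun _ hz => ⟨hz.1.trans h, hz.2⟩

theorem fst_eq_zero_of_mem_paraboloidRegion {b t : ℝ} {z : ℝ × E}
    (hz : z ∈ paraboloidRegion b t) (h : b * ‖z.2‖ ^ 2 ≤ 0) : z.1 = 0 :=
  le_antisymm (hz.2.2.trans h) hz.2.1

theorem paraboloidRegion_subset_of_nonpos {b : ℝ} (hb : b ≤ 0) (t : ℝ) :
    paraboloidRegion (E := E) b t ⊆ {0} ×ˢ univ :=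
  fun _ hz => ⟨fst_eq_zero_of_mem_paraboloidRegion hz
    (mul_nonpos_of_nonpos_of_nonneg hb (sq_nonneg _)), trivial⟩

variable [MeasurableSpace E] (μ : Measure E) [SFinite μ]

theorem measure_paraboloidRegion_of_nonpos {b : ℝ} (hb : b ≤ 0) (t : ℝ) :
    (volume.prod μ) (paraboloidRegion b t) = 0 :=
  measure_mono_null (paraboloidRegion_subset_of_nonpos hb t) (by simp [Measure.prod_prod])

variable [OpensMeasurableSpace E]

theorem lintegral_paraboloidRegion_fun_norm (g : ℝ → ℝ≥0∞) (hg : Measurable g) (b t : ℝ) :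
    ∫⁻ z in paraboloidRegion b t, g ‖z.2‖ ∂(volume.prod μ) =
      ∫⁻ y, (Iic t).indicator (fun r => ENNReal.ofReal (b * r ^ 2) * g r) ‖y‖ ∂μ := by
  rw [← lintegral_indicator (measurableSet_paraboloidRegion b t),
    lintegral_prod_symm (f := (paraboloidRegion b t).indicator fun z : ℝ × E => g ‖z.2‖)
      ((hg.comp measurable_snd.norm).indicator
      (measurableSet_paraboloidRegion b t)).aemeasurable]
  refine lintegral_congr fun y => ?_
  by_cases hy : ‖y‖ ≤ t
  · have hfiber : (paraboloidRegion b t).indicator (fun z : ℝ × E => g ‖z.2‖) ∘ (·, y) =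
        (Icc 0 (b * ‖y‖ ^ 2)).indicator fun _ => g ‖y‖ := by
      ext x
      simp [paraboloidRegion, indicator, hy, mem_Icc]
    simp only [← Function.comp_apply (f := (paraboloidRegion b t).indicator _) (g := (·, y)),
      hfiber, lintegral_indicator_const measurableSet_Icc, Real.volume_Icc, sub_zero,
      indicator_of_mem (show ‖y‖ ∈ Iic t from hy), mul_comm]
  · have hfiber (x : ℝ) : (paraboloidRegion b t).indicator (fun z : ℝ × E => g ‖z.2‖) (x, y) = 0 :=
      indicator_of_notMem (fun hz => hy hz.1) _
    simp [hfiber, indicator_of_notMem (show ‖y‖ ∉ Iic t from hy)]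

end ParaboloidRegion

theorem lintegral_Ioc_rpow_neg {t α : ℝ} (ht : 0 ≤ t) (hα : α < 1) :
    ∫⁻ r in Ioc 0 t, ENNReal.ofReal (r ^ (-α)) = ENNReal.ofReal (t ^ (1 - α) / (1 - α)) := by
  have hα' : -1 < -α := by linarith
  have hint : IntegrableOn (fun r : ℝ => r ^ (-α)) (Ioc 0 t) :=
    (intervalIntegrable_iff_integrableOn_Ioc_of_le ht).1
      (intervalIntegral.intervalIntegrable_rpow' hα')
  rw [← ofReal_integral_eq_lintegral_ofReal hint, ← intervalIntegral.integral_of_le ht,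
    integral_rpow (Or.inl hα'), Real.zero_rpow (by linarith), neg_add_eq_sub, sub_zero]
  filter_upwards [ae_restrict_mem measurableSet_Ioc] with r hr
  exact Real.rpow_nonneg hr.1.le _

section Model

variable {E : Type*} [NormedAddCommGroup E] [NormedSpace ℝ E] [MeasurableSpace E] [BorelSpace E]
  [Nontrivial E] [FiniteDimensional ℝ E] (μ : Measure E) [μ.IsAddHaarMeasure] {N : ℕ}

theorem lintegral_paraboloidRegion_rpow_norm (hN : finrank ℝ E + 1 = N) {b t α : ℝ}
    (hb : 0 ≤ b) (ht : 0 ≤ t) (hα : α < 1) :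
    ∫⁻ z in paraboloidRegion b t, ENNReal.ofReal (‖z.2‖ ^ (-(N : ℝ) - α)) ∂(volume.prod μ) =
      μ.toSphere univ * ENNReal.ofReal (b * t ^ (1 - α) / (1 - α)) := by
  have hg : Measurable fun r : ℝ => ENNReal.ofReal (r ^ (-(N : ℝ) - α)) :=
    (measurable_id.pow_const _).ennreal_ofReal
  have hradial : ∀ r ∈ Ioi (0 : ℝ), ENNReal.ofReal (r ^ (finrank ℝ E - 1)) *
      (Iic t).indicator
        (fun r => ENNReal.ofReal (b * r ^ 2) * ENNReal.ofReal (r ^ (-(N : ℝ) - α))) r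
      = ENNReal.ofReal b * (Ioc 0 t).indicator (fun r => ENNReal.ofReal (r ^ (-α))) r := by
    intro r (hr : 0 < r)
    by_cases hrt : r ≤ t
    · have hpow : r ^ (finrank ℝ E - 1) * r ^ 2 = r ^ (N : ℝ) := by
        rw [← pow_add, ← Real.rpow_natCast]
        congr 2
        have := Module.finrank_pos (R := ℝ) (M := E)
        omega
      rw [indicator_of_mem (show r ∈ Iic t from hrt),
        indicator_of_mem (show r ∈ Ioc 0 t from ⟨hr, hrt⟩),
        ← ENNReal.ofReal_mul hb, ← ENNReal.ofReal_mul (by positivity),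
        ← ENNReal.ofReal_mul (by positivity)]
      congr 1
      calc r ^ (finrank ℝ E - 1) * (b * r ^ 2 * r ^ (-(N : ℝ) - α))
          = b * (r ^ (N : ℝ) * r ^ (-(N : ℝ) - α)) := by rw [← hpow]; ring
        _ = b * r ^ (-α) := by rw [← Real.rpow_add hr]; ring_nf
    · simp [indicator_of_notMem (show r ∉ Iic t from hrt),
        indicator_of_notMem (show r ∉ Ioc 0 t from fun h => hrt h.2)]
  have hG : Measurable ((Iic t).indicator
      fun r => ENNReal.ofReal (b * r ^ 2) * ENNReal.ofReal (r ^ (-(N : ℝ) - α))) :=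
    Measurable.indicator (by fun_prop) measurableSet_Iic
  rw [lintegral_paraboloidRegion_fun_norm μ _ hg, lintegral_fun_norm_addHaar μ _ hG,
    setLIntegral_congr_fun measurableSet_Ioi hradial,
    lintegral_const_mul _ (Measurable.indicator (by fun_prop) measurableSet_Ioc),
    lintegral_indicator measurableSet_Ioc, Measure.restrict_restrict measurableSet_Ioc,
    inter_eq_self_of_subset_left Ioc_subset_Ioi_self, lintegral_Ioc_rpow_neg ht hα,
    ← ENNReal.ofReal_mul hb, mul_div_assoc]

end Model

theorem integral_mem_Icc_of_lintegral_mem_Icc {X : Type*} [MeasurableSpace X] {μ : Measure X}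
    {f : X → ℝ} (hf : 0 ≤ᵐ[μ] f) (hfm : AEStronglyMeasurable f μ) {a c : ℝ} (hc : 0 ≤ c)
    (h : ∫⁻ x, ENNReal.ofReal (f x) ∂μ ∈ Icc (ENNReal.ofReal a) (ENNReal.ofReal c)) :
    ∫ x, f x ∂μ ∈ Icc a c := by
  rw [integral_eq_lintegral_of_nonneg_ae hf hfm]
  have hfin := ne_top_of_le_ne_top ENNReal.ofReal_ne_top h.2
  exact ⟨(ENNReal.ofReal_le_iff_le_toReal hfin).1 h.1, ENNReal.toReal_le_of_le_ofReal hc h.2⟩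

section PointwiseBounds

variable {E : Type*} [NormedAddCommGroup E] {b t : ℝ} {z : ℝ × E}

theorem norm_snd_le_sqrt (z : ℝ × E) : ‖z.2‖ ≤ √(z.1 ^ 2 + ‖z.2‖ ^ 2) :=
  Real.le_sqrt_of_sq_le (by nlinarith [sq_nonneg z.1])

theorem sqrt_le_of_mem_paraboloidRegion (hz : z ∈ paraboloidRegion b t) :
    √(z.1 ^ 2 + ‖z.2‖ ^ 2) ≤ √(1 + b ^ 2 * t ^ 2) * ‖z.2‖ := by
  obtain ⟨hzt, hz1, hz1b⟩ := hz
  have hsq : z.1 ^ 2 + ‖z.2‖ ^ 2 ≤ (1 + b ^ 2 * t ^ 2) * ‖z.2‖ ^ 2 := by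
    have h1 : z.1 ^ 2 ≤ b ^ 2 * ‖z.2‖ ^ 2 * ‖z.2‖ ^ 2 := by nlinarith
    have h2 : ‖z.2‖ ^ 2 ≤ t ^ 2 := pow_le_pow_left₀ (norm_nonneg _) hzt 2
    nlinarith [mul_le_mul_of_nonneg_left h2 (mul_nonneg (sq_nonneg b) (sq_nonneg ‖z.2‖))]
  calc √(z.1 ^ 2 + ‖z.2‖ ^ 2) ≤ √((1 + b ^ 2 * t ^ 2) * ‖z.2‖ ^ 2) := Real.sqrt_le_sqrt hsq
    _ = √(1 + b ^ 2 * t ^ 2) * ‖z.2‖ := by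
      rw [Real.sqrt_mul (by positivity), Real.sqrt_sq (norm_nonneg _)]

theorem rpow_sqrt_le_of_mem_paraboloidRegion (hz : z ∈ paraboloidRegion b t)
    {p : ℝ} (hp : p ≤ 0) : √(z.1 ^ 2 + ‖z.2‖ ^ 2) ^ p ≤ ‖z.2‖ ^ p := by
  rcases (norm_nonneg z.2).eq_or_lt with h0 | h0
  · have hz1 : z.1 = 0 := fst_eq_zero_of_mem_paraboloidRegion hz (by rw [← h0]; simp)
    simp [hz1, ← h0]
  · exact Real.rpow_le_rpow_of_nonpos h0 (norm_snd_le_sqrt z) hp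

theorem le_rpow_sqrt_of_mem_paraboloidRegion (hz : z ∈ paraboloidRegion b t)
    {p q : ℝ} (hqp : q ≤ p) (hp : p < 0) :
    (1 + b ^ 2 * t ^ 2) ^ (q / 2) * ‖z.2‖ ^ p ≤ √(z.1 ^ 2 + ‖z.2‖ ^ 2) ^ p := by
  rcases (norm_nonneg z.2).eq_or_lt with h0 | h0
  · rw [← h0, Real.zero_rpow hp.ne, mul_zero]
    exact Real.rpow_nonneg (Real.sqrt_nonneg _) _
  · have hK : 1 ≤ 1 + b ^ 2 * t ^ 2 := by nlinarith [sq_nonneg (b * t)]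
    calc (1 + b ^ 2 * t ^ 2) ^ (q / 2) * ‖z.2‖ ^ p
        ≤ (1 + b ^ 2 * t ^ 2) ^ (p / 2) * ‖z.2‖ ^ p := by gcongr
      _ = (√(1 + b ^ 2 * t ^ 2) * ‖z.2‖) ^ p := by
          rw [Real.mul_rpow (Real.sqrt_nonneg _) h0.le, Real.sqrt_eq_rpow,
            ← Real.rpow_mul (by positivity), one_div_mul_eq_div]
      _ ≤ √(z.1 ^ 2 + ‖z.2‖ ^ 2) ^ p :=
          Real.rpow_le_rpow_of_nonpos (Real.sqrt_pos.2 (by positivity))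
            (sqrt_le_of_mem_paraboloidRegion hz) hp.le

end PointwiseBounds

section Limit

variable {E : Type*} [NormedAddCommGroup E] [NormedSpace ℝ E] [MeasurableSpace E] [BorelSpace E]
  [Nontrivial E] [FiniteDimensional ℝ E] (μ : Measure E) [μ.IsAddHaarMeasure] {N : ℕ}
  {b t δ α : ℝ}

theorem lintegral_paraboloidRegion_le (hN : finrank ℝ E + 1 = N) (hb : 0 ≤ b)
    (hδ : 0 ≤ δ) (hα : α ∈ Ico 0 1) :
    ∫⁻ z in paraboloidRegion b δ, ENNReal.ofReal (√(z.1 ^ 2 + ‖z.2‖ ^ 2) ^ (-(N : ℝ) - α))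
        ∂(volume.prod μ) ≤
      μ.toSphere univ * ENNReal.ofReal (b * δ ^ (1 - α) / (1 - α)) := by
  rw [← lintegral_paraboloidRegion_rpow_norm μ hN hb hδ hα.2]
  refine setLIntegral_mono (by fun_prop) fun z hz => ENNReal.ofReal_le_ofReal ?_
  have hN0 : (0 : ℝ) ≤ N := N.cast_nonneg
  exact rpow_sqrt_le_of_mem_paraboloidRegion hz (by linarith [hα.1])

theorem le_lintegral_paraboloidRegion (hN : finrank ℝ E + 1 = N) (hb : 0 ≤ b)
    (ht : 0 ≤ t) (htδ : t ≤ δ) (hα : α ∈ Ico 0 1) :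
    ENNReal.ofReal ((1 + b ^ 2 * t ^ 2) ^ ((-(N : ℝ) - 1) / 2)) *
        (μ.toSphere univ * ENNReal.ofReal (b * t ^ (1 - α) / (1 - α))) ≤
      ∫⁻ z in paraboloidRegion b δ, ENNReal.ofReal (√(z.1 ^ 2 + ‖z.2‖ ^ 2) ^ (-(N : ℝ) - α))
        ∂(volume.prod μ) := by
  rw [← lintegral_paraboloidRegion_rpow_norm μ hN hb ht hα.2, ← lintegral_const_mul _ (by fun_prop)]
  refine (setLIntegral_mono (by fun_prop) fun z hz => ?_).trans
    (lintegral_mono_set (paraboloidRegion_mono htδ))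
  have hN1 : (1 : ℝ) ≤ N := by exact_mod_cast (show 1 ≤ N by omega)
  rw [← ENNReal.ofReal_mul (by positivity)]
  exact ENNReal.ofReal_le_ofReal
    (le_rpow_sqrt_of_mem_paraboloidRegion hz (by linarith [hα.2]) (by linarith [hα.1]))

theorem one_sub_mul_setIntegral_paraboloidRegion_mem_Icc (hN : finrank ℝ E + 1 = N)
    (hb : 0 ≤ b) (ht : 0 ≤ t) (htδ : t ≤ δ) (hα : α ∈ Ico 0 1) :
    (1 - α) * ∫ z in paraboloidRegion b δ, √(z.1 ^ 2 + ‖z.2‖ ^ 2) ^ (-(N : ℝ) - α)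
        ∂(volume.prod μ) ∈
      Icc ((1 + b ^ 2 * t ^ 2) ^ ((-(N : ℝ) - 1) / 2) * (b * μ.toSphere.real univ * t ^ (1 - α)))
        (b * μ.toSphere.real univ * δ ^ (1 - α)) := by
  have h1α : 0 < 1 - α := sub_pos.2 hα.2
  have hσ : μ.toSphere univ = ENNReal.ofReal (μ.toSphere.real univ) :=
    (ENNReal.ofReal_toReal (measure_ne_top _ _)).symm
  have hbounds : ∫ z in paraboloidRegion b δ, √(z.1 ^ 2 + ‖z.2‖ ^ 2) ^ (-(N : ℝ) - α)
      ∂(volume.prod μ) ∈ Icc ((1 + b ^ 2 * t ^ 2) ^ ((-(N : ℝ) - 1) / 2) *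
        (μ.toSphere.real univ * (b * t ^ (1 - α) / (1 - α))))
        (μ.toSphere.real univ * (b * δ ^ (1 - α) / (1 - α))) := by
    refine integral_mem_Icc_of_lintegral_mem_Icc
      (.of_forall fun z => Real.rpow_nonneg (Real.sqrt_nonneg _) _)
      (Measurable.aestronglyMeasurable (by fun_prop))
      (mul_nonneg measureReal_nonneg
        (div_nonneg (mul_nonneg hb (Real.rpow_nonneg (ht.trans htδ) _)) h1α.le)) ⟨?_, ?_⟩
    · rw [ENNReal.ofReal_mul (by positivity), ENNReal.ofReal_mul measureReal_nonneg, ← hσ]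
      exact le_lintegral_paraboloidRegion μ hN hb ht htδ hα
    · rw [ENNReal.ofReal_mul measureReal_nonneg, ← hσ]
      exact lintegral_paraboloidRegion_le μ hN hb (ht.trans htδ) hα
  constructor
  · calc _ = (1 - α) * ((1 + b ^ 2 * t ^ 2) ^ ((-(N : ℝ) - 1) / 2) *
          (μ.toSphere.real univ * (b * t ^ (1 - α) / (1 - α)))) := by field_simp
      _ ≤ _ := by gcongr; exact hbounds.1
  · calc _ ≤ (1 - α) * (μ.toSphere.real univ * (b * δ ^ (1 - α) / (1 - α))) := by
          gcongr; exact hbounds.2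
      _ = _ := by field_simp

theorem tendsto_one_sub_mul_setIntegral_paraboloidRegion (hN : finrank ℝ E + 1 = N)
    (hb : 0 ≤ b) (hδ : 0 < δ) :
    Tendsto (fun α => (1 - α) * ∫ z in paraboloidRegion b δ,
        √(z.1 ^ 2 + ‖z.2‖ ^ 2) ^ (-(N : ℝ) - α) ∂(volume.prod μ))
      (𝓝[<] 1) (𝓝 (b * μ.toSphere.real univ)) := by
  set σ := μ.toSphere.real univ
  set K : ℝ → ℝ := fun t => (1 + b ^ 2 * t ^ 2) ^ ((-(N : ℝ) - 1) / 2)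
  have hu : Tendsto (fun α : ℝ => 1 - α) (𝓝[<] 1) (𝓝[>] 0) := by
    refine tendsto_nhdsWithin_iff.2
      ⟨?_, eventually_nhdsWithin_of_forall fun α h => mem_Ioi.2 (sub_pos.2 h)⟩
    exact ((continuous_const.sub continuous_id).tendsto' 1 0 (sub_self 1)).mono_left
      nhdsWithin_le_nhds
  have hδpow : Tendsto (fun u : ℝ => δ ^ u) (𝓝 0) (𝓝 1) := by
    simpa using (Real.continuousAt_const_rpow hδ.ne' (b := 0)).tendsto
  have hK : Tendsto (fun u => K (u * δ)) (𝓝 0) (𝓝 1) := by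
    have hcont : Continuous fun u => K (u * δ) :=
      Continuous.rpow_const (by fun_prop) fun u => Or.inl (by positivity)
    simpa [K] using hcont.tendsto 0
  have hupper : Tendsto (fun u : ℝ => b * σ * δ ^ u) (𝓝[>] 0) (𝓝 (b * σ)) := by
    simpa using (hδpow.const_mul (b * σ)).mono_left nhdsWithin_le_nhds
  have hlower : Tendsto (fun u : ℝ => K (u * δ) * (b * σ * (u * δ) ^ u)) (𝓝[>] 0) (𝓝 (b * σ)) := by
    have hpow : Tendsto (fun u : ℝ => (u * δ) ^ u) (𝓝[>] 0) (𝓝 1) := by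
      have hprod := tendsto_rpow_self_nhdsGT_zero.mul (hδpow.mono_left nhdsWithin_le_nhds)
      rw [one_mul] at hprod
      refine hprod.congr' ?_
      filter_upwards [self_mem_nhdsWithin] with u hu0
      rw [Real.mul_rpow (le_of_lt hu0) hδ.le]
    have := (hK.mono_left nhdsWithin_le_nhds).mul (hpow.const_mul (b * σ))
    rwa [mul_one, one_mul] at this
  refine tendsto_of_tendsto_of_tendsto_of_le_of_le' (hlower.comp hu) (hupper.comp hu) ?_ ?_
  all_goals
    filter_upwards [Ioo_mem_nhdsLT (show (0 : ℝ) < 1 by norm_num)] with α hα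
    have h := one_sub_mul_setIntegral_paraboloidRegion_mem_Icc μ hN hb
      (mul_nonneg (sub_pos.2 hα.2).le hδ.le)
      (mul_le_of_le_one_left hδ.le (by linarith [hα.1])) (Ioo_subset_Ico_self hα)
  exacts [h.1, h.2]

end Limit

/-- Model computation for Proposition 2.5: with `z = (z₁, z') ∈ ℝ × ℝ^{N-1}`, the rescaled
singular measure of the region between `{z₁ = 0}` and the paraboloid `{z₁ = B'|z'|²}`
(within `|z'| ≤ δ`) converges, as `α → 1⁻`, to `C · max(B',0) · σ(S^{N-2})` for a
positive constant `C` independent of `B'`. -/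
theorem model_paraboloid_limit (N : ℕ) (hN : 2 ≤ N) (δ : ℝ) (hδ : 0 < δ) :
    ∃ C : ℝ, 0 < C ∧ ∀ B' : ℝ,
      Tendsto (fun α : ℝ =>
          (1 - α) * ∫ z in {z : ℝ × EuclideanSpace ℝ (Fin (N - 1)) |
              ‖z.2‖ ≤ δ ∧ 0 ≤ z.1 ∧ z.1 ≤ B' * ‖z.2‖ ^ 2},
            Real.sqrt (z.1 ^ 2 + ‖z.2‖ ^ 2) ^ (-(N:ℝ) - α))
        (nhdsWithin 1 (Set.Iio 1))
        (nhds (C * max B' 0 *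
          (((volume : Measure (EuclideanSpace ℝ (Fin (N - 1)))).toSphere
            Set.univ).toReal))) := by
  have : NeZero (N - 1) := ⟨by omega⟩
  have hdim : finrank ℝ (EuclideanSpace ℝ (Fin (N - 1))) + 1 = N := by
    rw [finrank_euclideanSpace_fin]
    omega
  refine ⟨1, one_pos, fun B' => ?_⟩
  rw [one_mul]
  rcases le_or_gt B' 0 with hB | hB
  · have hnull : volume {z : ℝ × EuclideanSpace ℝ (Fin (N - 1)) |
        ‖z.2‖ ≤ δ ∧ 0 ≤ z.1 ∧ z.1 ≤ B' * ‖z.2‖ ^ 2} = 0 :=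
      measure_paraboloidRegion_of_nonpos volume hB δ
    rw [max_eq_right hB, zero_mul]
    refine tendsto_const_nhds.congr fun α => ?_
    rw [Measure.restrict_eq_zero.2 hnull, integral_zero_measure, mul_zero]
  · rw [max_eq_left hB.le]
    exact tendsto_one_sub_mul_setIntegral_paraboloidRegion volume hdim hB.le hδ
end
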